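/- arXiv:1405.4372 — 2 statements merged into one kernel-verified Lean document; each statement's English description precedes it below -/
import Mathlib

section
/- For a 2×2 symmetric positive definite matrix J = Σ_j (r_j J_r(φ_j) + s_j J_r(φ_j + π/2)) with r_j, s_j ≥ 0, where J_r(φ) = (cosφ, sinφ)(cosφ, sinφ)ᵀ, one has tr(J⁻¹) = 2 Σ_k (r_k + s_k) / ( Σ_{i,i'} [ (r_i − s_i)(r_{i'} − s_{i'}) sin²(φ_i − φ_{i'}) + s_i r_{i'} + r_i s_{i'} ] ), provided the denominator (which equals 2 det J) is positive. -/
/-!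
For a 2×2 matrix, `tr J⁻¹ = tr J / det J`. Since `J_r(φ + π/2) = 1 - J_r(φ)`, every summand of
`J` is `(r - s) J_r(φ) + s • 1`, of trace `r + s`. Expanding `2 det J` through the polarization
`polarDet` of the determinant gives the double sum, because `polarDet` pairs `J_r(a)` with `J_r(b)`
to `(cos a sin b - sin a cos b)² = sin²(a - b)`, a matrix with `1` to its trace, and `1` with `1`
to `2`.
-/

open Real Matrix Finset

/-- Ranging direction matrix `J_r(φ)`. -/
noncomputable def Jr (φ : ℝ) : Matrix (Fin 2) (Fin 2) ℝ :=
  !![Real.cos φ ^ 2, Real.cos φ * Real.sin φ;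
     Real.cos φ * Real.sin φ, Real.sin φ ^ 2]

/-- Both sides are `0` when `A` is singular, by the junk conventions of `⁻¹` and `/`. -/
theorem Matrix.trace_inv_fin_two {K : Type*} [Field K] (A : Matrix (Fin 2) (Fin 2) K) :
    A⁻¹.trace = A.trace / A.det := by
  rw [inv_def, trace_smul, adjugate_fin_two, trace_fin_two_of, trace_fin_two, Ring.inverse_eq_inv,
    smul_eq_mul, add_comm, div_eq_inv_mul]

section PolarDet

variable {R : Type*} [CommRing R]

def polarDet : Matrix (Fin 2) (Fin 2) R →ₗ[R] Matrix (Fin 2) (Fin 2) R →ₗ[R] R :=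
  LinearMap.mk₂ R (fun A B => A 0 0 * B 1 1 + A 1 1 * B 0 0 - A 0 1 * B 1 0 - A 1 0 * B 0 1)
    (fun _ _ _ => by simp only [Matrix.add_apply]; ring)
    (fun _ _ _ => by simp only [Matrix.smul_apply, smul_eq_mul]; ring)
    (fun _ _ _ => by simp only [Matrix.add_apply]; ring)
    (fun _ _ _ => by simp only [Matrix.smul_apply, smul_eq_mul]; ring)

theorem polarDet_apply (A B : Matrix (Fin 2) (Fin 2) R) :
    polarDet A B = A 0 0 * B 1 1 + A 1 1 * B 0 0 - A 0 1 * B 1 0 - A 1 0 * B 0 1 :=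
  rfl

theorem polarDet_self (A : Matrix (Fin 2) (Fin 2) R) : polarDet A A = 2 * A.det := by
  rw [polarDet_apply, det_fin_two]
  ring

theorem polarDet_one_right (A : Matrix (Fin 2) (Fin 2) R) : polarDet A 1 = A.trace := by
  simp [polarDet_apply, trace_fin_two]

theorem polarDet_one_left (A : Matrix (Fin 2) (Fin 2) R) : polarDet 1 A = A.trace := by
  simp [polarDet_apply, trace_fin_two, add_comm]

theorem two_mul_det_sum {ι : Type*} (s : Finset ι) (M : ι → Matrix (Fin 2) (Fin 2) R) :
    2 * (∑ i ∈ s, M i).det = ∑ i ∈ s, ∑ j ∈ s, polarDet (M i) (M j) := by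
  rw [← polarDet_self, map_sum polarDet, LinearMap.sum_apply]
  simp only [map_sum]

end PolarDet

theorem trace_Jr (φ : ℝ) : (Jr φ).trace = 1 := by
  simp [Jr, trace_fin_two_of, cos_sq_add_sin_sq]

theorem Jr_add_pi_div_two (φ : ℝ) : Jr (φ + π / 2) = 1 - Jr φ := by
  rw [eq_sub_iff_add_eq', Jr, Jr, cos_add_pi_div_two, sin_add_pi_div_two, one_fin_two]
  ext i j
  fin_cases i <;> fin_cases j <;> simp [cos_sq_add_sin_sq, sin_sq_add_cos_sq, mul_comm]

theorem polarDet_Jr (a b : ℝ) : polarDet (Jr a) (Jr b) = sin (a - b) ^ 2 := by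
  rw [polarDet_apply, Jr, Jr, sin_sub]
  simp only [of_apply, cons_val', cons_val_zero, cons_val_fin_one, cons_val_one]
  ring

theorem polarDet_smul_Jr_add_smul_Jr (r s a r' s' b : ℝ) :
    polarDet (r • Jr a + s • Jr (a + π / 2)) (r' • Jr b + s' • Jr (b + π / 2))
      = (r - s) * (r' - s') * sin (a - b) ^ 2 + s * r' + r * s' := by
  have hJ (c d φ : ℝ) : c • Jr φ + d • Jr (φ + π / 2) = (c - d) • Jr φ + d • 1 := by
    rw [Jr_add_pi_div_two]
    module
  simp only [hJ, map_add, map_smul, LinearMap.add_apply, LinearMap.smul_apply, smul_eq_mul,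
    polarDet_Jr, polarDet_one_left, polarDet_one_right, polarDet_self, trace_Jr, det_one]
  ring

theorem stmt_14_general (m : ℕ) (r s φ : Fin m → ℝ) :
    ((∑ j, (r j • Jr (φ j) + s j • Jr (φ j + Real.pi / 2)))⁻¹).trace
      = 2 * (∑ k, (r k + s k)) /
        (∑ i, ∑ i', ((r i - s i) * (r i' - s i') * Real.sin (φ i - φ i') ^ 2
          + s i * r i' + r i * s i')) := by
  set J := ∑ j, (r j • Jr (φ j) + s j • Jr (φ j + Real.pi / 2))
  have htrace : J.trace = ∑ k, (r k + s k) := by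
    simp only [J, trace_sum, trace_add, trace_smul, trace_Jr, smul_eq_mul, mul_one]
  have hdet : 2 * J.det = ∑ i, ∑ i', ((r i - s i) * (r i' - s i') * Real.sin (φ i - φ i') ^ 2
      + s i * r i' + r i * s i') := by
    simp only [J, two_mul_det_sum, polarDet_smul_Jr_add_smul_Jr]
  rw [trace_inv_fin_two, ← hdet, htrace, mul_div_mul_left _ _ two_ne_zero]

theorem stmt_14 (m : ℕ) (r s φ : Fin m → ℝ)
    (hr : ∀ j, 0 ≤ r j) (hs : ∀ j, 0 ≤ s j)
    (hd : 0 < ∑ i, ∑ i', ((r i - s i) * (r i' - s i') * Real.sin (φ i - φ i') ^ 2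
            + s i * r i' + r i * s i')) :
    ((∑ j, (r j • Jr (φ j) + s j • Jr (φ j + Real.pi / 2)))⁻¹).trace
      = 2 * (∑ k, (r k + s k)) /
        (∑ i, ∑ i', ((r i - s i) * (r i' - s i') * Real.sin (φ i - φ i') ^ 2
          + s i * r i' + r i * s i')) :=
  stmt_14_general m r s φ
end

section
/- Under the constraint that |Σ_i u_i e^{j2φ_i}| = 0 with all other quantities fixed, the denominator Σ_{i,i'} [u_i u_{i'} sin²(φ_i − φ_{i'}) + s_i r_{i'} + r_i s_{i'}] is maximized over angle configurations (φ_1,…,φ_m), where u_i = r_i − s_i; hence the SPEB 2Σ(r_k+s_k)/denominator is minimized exactly when Σ_i u_i e^{j2φ_i} = 0. -/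
/-!
Writing `u i = r i - s i` and `P φ = ∑ i, u i e^{2iφ_i}`, the identity
`sin² (a - b) = (1 - cos 2a cos 2b - sin 2a sin 2b) / 2` gives
`∑ i, ∑ j, u i u j sin² (φ i - φ j) = ((∑ i, u i)² - |P φ|²) / 2`.
Hence `denom φ + |P φ|² / 2` does not depend on `φ`.
-/

open Real Complex Finset

/-- The denominator (which equals `2 det J`) as a function of the anchor angles. -/
noncomputable def denom (m : ℕ) (r s : Fin m → ℝ) (φ : Fin m → ℝ) : ℝ :=
  ∑ i, ∑ i', ((r i - s i) * (r i' - s i') * Real.sin (φ i - φ i') ^ 2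
    + s i * r i' + r i * s i')

section PhasorSum

variable {ι : Type*} [Fintype ι] (u φ : ι → ℝ)

noncomputable def phasorSum : ℂ := ∑ i, (u i : ℂ) * Complex.exp (Complex.I * (2 * (φ i : ℂ)))

lemma phasorSum_re : (phasorSum u φ).re = ∑ i, u i * Real.cos (2 * φ i) := by
  simp [phasorSum, Complex.re_sum, Complex.exp_re, Complex.exp_im, ← Complex.ofReal_ofNat,
    ← Complex.ofReal_mul]

lemma phasorSum_im : (phasorSum u φ).im = ∑ i, u i * Real.sin (2 * φ i) := by
  simp [phasorSum, Complex.im_sum, Complex.exp_re, Complex.exp_im, ← Complex.ofReal_ofNat,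
    ← Complex.ofReal_mul]

lemma sum_sum_mul_sin_sub_sq :
    ∑ i, ∑ j, u i * u j * Real.sin (φ i - φ j) ^ 2
      = ((∑ i, u i) ^ 2 - Complex.normSq (phasorSum u φ)) / 2 := by
  have hsin (i j : ι) : Real.sin (φ i - φ j) ^ 2 = (1 - (Real.cos (2 * φ i) * Real.cos (2 * φ j)
      + Real.sin (2 * φ i) * Real.sin (2 * φ j))) / 2 := by
    rw [Real.sin_sq_eq_half_sub, ← Real.cos_sub, mul_sub]
    ring
  simp only [Complex.normSq_apply, phasorSum_re, phasorSum_im, sq, Finset.sum_mul_sum, hsin]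
  simp only [← Finset.sum_add_distrib, ← Finset.sum_sub_distrib, Finset.sum_div]
  refine Finset.sum_congr rfl fun i _ => Finset.sum_congr rfl fun j _ => ?_
  ring

end PhasorSum

lemma denom_eq (m : ℕ) (r s φ : Fin m → ℝ) :
    denom m r s φ
      = ((∑ i, (r i - s i)) ^ 2 - Complex.normSq (phasorSum (fun i => r i - s i) φ)) / 2
        + ∑ i, ∑ i', (s i * r i' + r i * s i') := by
  rw [← sum_sum_mul_sin_sub_sq (fun i => r i - s i), ← Finset.sum_add_distrib]
  refine Finset.sum_congr rfl fun i _ => ?_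
  rw [← Finset.sum_add_distrib]
  refine Finset.sum_congr rfl fun j _ => ?_
  ring

lemma denom_add_normSq_eq_of_phasorSum_eq_zero {m : ℕ} {r s φstar : Fin m → ℝ}
    (hstar : phasorSum (fun i => r i - s i) φstar = 0) (φ : Fin m → ℝ) :
    denom m r s φ + Complex.normSq (phasorSum (fun i => r i - s i) φ) / 2
      = denom m r s φstar := by
  rw [denom_eq, denom_eq, hstar, map_zero]
  ring

theorem stmt_15 (m : ℕ) (r s : Fin m → ℝ)
    (hr : ∀ j, 0 ≤ r j) (hs : ∀ j, 0 ≤ s j)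
    (φstar : Fin m → ℝ)
    (hstar : ∑ i, ((r i - s i : ℝ) : ℂ) * Complex.exp (Complex.I * (2 * (φstar i : ℂ))) = 0) :
    ∀ φ : Fin m → ℝ,
      denom m r s φ ≤ denom m r s φstar ∧
      (denom m r s φ = denom m r s φstar ↔
        ∑ i, ((r i - s i : ℝ) : ℂ) * Complex.exp (Complex.I * (2 * (φ i : ℂ))) = 0) ∧
      (0 < denom m r s φ →
        2 * (∑ k, (r k + s k)) / denom m r s φstar
          ≤ 2 * (∑ k, (r k + s k)) / denom m r s φ) := by
  intro φ
  have hgap := denom_add_normSq_eq_of_phasorSum_eq_zero hstar φ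
  have hle : denom m r s φ ≤ denom m r s φstar := by
    rw [← hgap]
    linarith [Complex.normSq_nonneg (phasorSum (fun i => r i - s i) φ)]
  refine ⟨hle, ?_, fun hpos => div_le_div_of_nonneg_left ?_ hpos hle⟩
  · rw [← hgap, left_eq_add, div_eq_zero_iff, or_iff_left two_ne_zero, Complex.normSq_eq_zero]
    exact Iff.rfl
  · exact mul_nonneg zero_le_two (Finset.sum_nonneg fun k _ => add_nonneg (hr k) (hs k))
end
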